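/- arXiv:math/0305153 — 3 statements merged into one kernel-verified Lean document; each statement's English description precedes it below -/
import Mathlib

section
/- The group of increasing piecewise linear homeomorphisms of [0,1] with finitely many breakpoints is bi-orderable: the order defined by f < g iff at the smallest point c where f and g differ (i.e., the supremum of the set of t with f = g on [0,t]), the right derivative of f at c is less than the right derivative of g at c, is a total order invariant under composition on both sides. -/
/-!
Read `plfLt f g` through right slopes, i.e. through the germs of `f` and `g` in `𝓝[≥] c`. A germ
has a unique slope, and `f = g` on `[0, c₂]` gives `f` and `g` the same slope at every `c₁ < c₂`;
comparing the witnesses of two relations at their points `c₁ ≤ c₂` then gives irreflexivity,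
asymmetry and transitivity for arbitrary functions. For PL homeomorphisms, continuity makes
`f = g` on `[0, c]` for the infimum `c` of the points where they differ, and the slopes at `c`
differ, since otherwise `f = g` a little further. Invariance comes from the chain rule for right
slopes: PL homeomorphisms have positive right slopes and map `[0, 1)` onto itself, so composing
on either side multiplies both slopes by the same positive number.
-/

/-- `f` is an increasing piecewise linear homeomorphism of `[0,1]`
(fixing the endpoints) with finitely many breakpoints. -/
def IsPLF (f : ℝ → ℝ) : Prop :=
  f 0 = 0 ∧ f 1 = 1 ∧ StrictMonoOn f (Set.Icc 0 1) ∧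
  ∃ (n : ℕ) (a : Fin (n + 1) → ℝ),
    StrictMono a ∧ a 0 = 0 ∧ a (Fin.last n) = 1 ∧
    ∀ i : Fin n, ∃ k : ℝ, ∀ t ∈ Set.Icc (a i.castSucc) (a i.succ),
      f t = f (a i.castSucc) + k * (t - a i.castSucc)

/-- `f < g` in the order determined by the first point of difference:
there is `c ∈ [0,1)` with `f = g` on `[0,c]`, and on a right neighbourhood of
`c` both `f` and `g` are affine, the right derivative (slope) of `f` at `c`
being smaller than that of `g`. -/
def plfLt (f g : ℝ → ℝ) : Prop :=
  ∃ c ∈ Set.Ico (0:ℝ) 1, (∀ t ∈ Set.Icc (0:ℝ) c, f t = g t) ∧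
    ∃ δ > (0:ℝ), ∃ kf kg : ℝ, kf < kg ∧
      (∀ t ∈ Set.Icc c (c + δ), f t = f c + kf * (t - c)) ∧
      (∀ t ∈ Set.Icc c (c + δ), g t = g c + kg * (t - c))

open Set Filter Topology

def HasRightSlope (f : ℝ → ℝ) (c k : ℝ) : Prop :=
  ∀ᶠ t in 𝓝[≥] c, f t = f c + k * (t - c)

namespace HasRightSlope

variable {f g : ℝ → ℝ} {c k k' : ℝ}

theorem unique (h : HasRightSlope f c k) (h' : HasRightSlope f c k') : k = k' := by
  have hgt : ∀ᶠ t in 𝓝[>] c, c < t := self_mem_nhdsWithin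
  obtain ⟨t, hct, ht, ht'⟩ := (hgt.and (nhdsWithin_mono c Ioi_subset_Ici_self (h.and h'))).exists
  exact mul_right_cancel₀ (sub_ne_zero.2 (ne_of_gt hct)) (by linarith)

theorem congr_of_eqOn {a b : ℝ} (h : HasRightSlope f c k) (hfg : EqOn f g (Icc a b))
    (hac : a ≤ c) (hcb : c < b) : HasRightSlope g c k := by
  filter_upwards [h, Icc_mem_nhdsGE_of_mem ⟨hac, hcb⟩] with t ht htab
  rwa [← hfg htab, ← hfg ⟨hac, hcb.le⟩]

theorem tendsto_nhdsGE (h : HasRightSlope f c k) (hk : 0 ≤ k) :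
    Tendsto f (𝓝[≥] c) (𝓝[≥] (f c)) := by
  refine tendsto_nhdsWithin_iff.2 ⟨?_, ?_⟩
  · have : Tendsto (fun t => f c + k * (t - c)) (𝓝[≥] c) (𝓝 (f c + k * (c - c))) :=
      (Continuous.tendsto (by fun_prop) c).mono_left nhdsWithin_le_nhds
    rw [sub_self, mul_zero, add_zero] at this
    exact this.congr' (h.mono fun t ht => ht.symm)
  · filter_upwards [h, self_mem_nhdsWithin] with t ht hct
    rw [ht, mem_Ici, le_add_iff_nonneg_right]
    exact mul_nonneg hk (sub_nonneg.2 hct)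

theorem comp (hg : HasRightSlope g (f c) k') (hf : HasRightSlope f c k) (hk : 0 ≤ k) :
    HasRightSlope (g ∘ f) c (k' * k) := by
  filter_upwards [hf, hf.tendsto_nhdsGE hk hg] with t hft hgft
  rw [Function.comp_apply, Function.comp_apply, hgft, hft]
  ring

end HasRightSlope

theorem eventually_nhdsGE_iff_exists_Icc {c : ℝ} {P : ℝ → Prop} :
    (∀ᶠ t in 𝓝[≥] c, P t) ↔ ∃ δ > 0, ∀ t ∈ Icc c (c + δ), P t := by
  refine mem_nhdsGE_iff_exists_Icc_subset.trans ⟨?_, ?_⟩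
  · rintro ⟨u, hcu, hu⟩
    exact ⟨u - c, sub_pos.2 hcu, by rwa [add_sub_cancel]⟩
  · rintro ⟨δ, hδ, hP⟩
    exact ⟨c + δ, lt_add_of_pos_right c hδ, hP⟩

theorem plfLt_iff {f g : ℝ → ℝ} :
    plfLt f g ↔ ∃ c ∈ Ico (0 : ℝ) 1, EqOn f g (Icc 0 c) ∧
      ∃ kf kg : ℝ, kf < kg ∧ HasRightSlope f c kf ∧ HasRightSlope g c kg := by
  constructor
  · rintro ⟨c, hc, heq, δ, hδ, kf, kg, hk, hf, hg⟩
    exact ⟨c, hc, heq, kf, kg, hk, eventually_nhdsGE_iff_exists_Icc.2 ⟨δ, hδ, hf⟩,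
      eventually_nhdsGE_iff_exists_Icc.2 ⟨δ, hδ, hg⟩⟩
  · rintro ⟨c, hc, heq, kf, kg, hk, hf, hg⟩
    obtain ⟨δ, hδ, hfg⟩ := eventually_nhdsGE_iff_exists_Icc.1 (hf.and hg)
    exact ⟨c, hc, heq, δ, hδ, kf, kg, hk, fun t ht => (hfg t ht).1, fun t ht => (hfg t ht).2⟩

section Order

variable {f g h : ℝ → ℝ}

theorem plfLt_irrefl (f : ℝ → ℝ) : ¬ plfLt f f := by
  intro hff
  obtain ⟨c, -, -, kf, kg, hk, hf, hg⟩ := plfLt_iff.1 hff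
  exact hk.ne (hf.unique hg)

theorem plfLt_asymm (hfg : plfLt f g) : ¬ plfLt g f := by
  intro hgf
  obtain ⟨c₁, hc₁, heq₁, kf, kg, hk, hf, hg⟩ := plfLt_iff.1 hfg
  obtain ⟨c₂, hc₂, heq₂, kg', kf', hk', hg', hf'⟩ := plfLt_iff.1 hgf
  rcases lt_trichotomy c₁ c₂ with hc | rfl | hc
  · exact hk.ne ((hf.congr_of_eqOn heq₂.symm hc₁.1 hc).unique hg)
  · linarith [hf.unique hf', hg.unique hg']
  · exact hk'.ne ((hg'.congr_of_eqOn heq₁.symm hc₂.1 hc).unique hf')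

theorem plfLt_trans (hfg : plfLt f g) (hgh : plfLt g h) : plfLt f h := by
  obtain ⟨c₁, hc₁, heq₁, kf, kg, hk, hf, hg⟩ := plfLt_iff.1 hfg
  obtain ⟨c₂, hc₂, heq₂, kg', kh, hk', hg', hh⟩ := plfLt_iff.1 hgh
  rcases lt_trichotomy c₁ c₂ with hc | rfl | hc
  · exact plfLt_iff.2 ⟨c₁, hc₁, heq₁.trans (heq₂.mono (Icc_subset_Icc_right hc.le)), kf, kg, hk,
      hf, hg.congr_of_eqOn heq₂ hc₁.1 hc⟩
  · exact plfLt_iff.2 ⟨c₁, hc₁, heq₁.trans heq₂, kf, kh, by linarith [hg.unique hg'], hf, hh⟩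
  · exact plfLt_iff.2 ⟨c₂, hc₂, (heq₁.mono (Icc_subset_Icc_right hc.le)).trans heq₂, kg', kh, hk',
      hg'.congr_of_eqOn heq₁.symm hc₂.1 hc, hh⟩

end Order

theorem exists_castSucc_le_lt_succ {α : Type*} [LinearOrder α] :
    ∀ {n : ℕ} (a : Fin (n + 1) → α) {x : α}, a 0 ≤ x → x < a (Fin.last n) →
      ∃ i : Fin n, a i.castSucc ≤ x ∧ x < a i.succ
  | 0, _, _, h0, h1 => absurd h1 (not_lt.2 h0)
  | n + 1, a, x, h0, h1 => by
    by_cases hx : x < a (Fin.last n).castSucc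
    · obtain ⟨i, hi⟩ := exists_castSucc_le_lt_succ (fun j => a j.castSucc) h0 hx
      exact ⟨i.castSucc, hi⟩
    · exact ⟨Fin.last n, not_lt.1 hx, h1⟩

namespace IsPLF

variable {f g : ℝ → ℝ} {c : ℝ}

theorem continuousOn (hf : IsPLF f) : ContinuousOn f (Icc 0 1) := by
  obtain ⟨-, -, -, n, a, ha, ha0, ha1, hpiece⟩ := hf
  have hcover : Icc 0 1 ⊆ ⋃ i : Fin n, Icc (a i.castSucc) (a i.succ) := by
    rintro x ⟨hx0, hx1⟩
    rcases hx1.lt_or_eq with hx1 | rfl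
    · obtain ⟨i, hi⟩ := exists_castSucc_le_lt_succ a (x := x) (by rwa [ha0]) (by rwa [ha1])
      exact mem_iUnion.2 ⟨i, hi.1, hi.2.le⟩
    · cases n with
      | zero => exact absurd (ha0.symm.trans ha1) zero_ne_one
      | succ m =>
        exact mem_iUnion.2 ⟨Fin.last m, ha1 ▸ ha.monotone (Fin.le_last _), ha1.ge⟩
  refine ((locallyFinite_of_finite _).continuousOn_iUnion (fun _ => isClosed_Icc)
    fun i => ?_).mono hcover
  obtain ⟨k, hk⟩ := hpiece i
  exact (Continuous.continuousOn (by fun_prop)).congr hk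

theorem exists_hasRightSlope (hf : IsPLF f) (hc : c ∈ Ico 0 1) : ∃ k > 0, HasRightSlope f c k := by
  obtain ⟨-, -, hmono, n, a, ha, ha0, ha1, hpiece⟩ := hf
  obtain ⟨i, hi, hci⟩ := exists_castSucc_le_lt_succ a (x := c) (by rw [ha0]; exact hc.1)
    (by rw [ha1]; exact hc.2)
  obtain ⟨k, hk⟩ := hpiece i
  have hkc : ∀ t ∈ Icc c (a i.succ), f t = f c + k * (t - c) := fun t ht => by
    rw [hk t ⟨hi.trans ht.1, ht.2⟩, hk c ⟨hi, hci.le⟩]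
    ring
  refine ⟨k, ?_, mem_of_superset (Icc_mem_nhdsGE hci) hkc⟩
  have hlt := hmono ⟨hc.1, hc.2.le⟩ ⟨hc.1.trans hci.le, ha1 ▸ ha.monotone (Fin.le_last _)⟩ hci
  rw [hkc _ ⟨hci.le, le_rfl⟩, lt_add_iff_pos_right] at hlt
  exact pos_of_mul_pos_left hlt (sub_nonneg.2 hci.le)

theorem hasRightSlope_pos (hf : IsPLF f) (hc : c ∈ Ico 0 1) {k : ℝ} (h : HasRightSlope f c k) :
    0 < k := by
  obtain ⟨k', hk', h'⟩ := hf.exists_hasRightSlope hc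
  exact (h.unique h').symm ▸ hk'

theorem mapsTo_Icc (hf : IsPLF f) (hc : c ≤ 1) : MapsTo f (Icc 0 c) (Icc 0 (f c)) := by
  obtain ⟨hf0, -, hmono, -⟩ := hf
  rintro t ⟨ht0, htc⟩
  exact ⟨hf0 ▸ hmono.monotoneOn ⟨le_rfl, zero_le_one⟩ ⟨ht0, htc.trans hc⟩ ht0,
    hmono.monotoneOn ⟨ht0, htc.trans hc⟩ ⟨ht0.trans htc, hc⟩ htc⟩

theorem mapsTo_Ico (hf : IsPLF f) : MapsTo f (Ico 0 1) (Ico 0 1) := fun _ ht =>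
  ⟨(hf.mapsTo_Icc ht.2.le ⟨ht.1, le_rfl⟩).1,
    hf.2.1 ▸ hf.2.2.1 ⟨ht.1, ht.2.le⟩ ⟨zero_le_one, le_rfl⟩ ht.2⟩

theorem surjOn_Ico (hf : IsPLF f) : SurjOn f (Ico 0 1) (Ico 0 1) := by
  intro y hy
  have hy' : y ∈ Icc (f 0) (f 1) := by
    rw [hf.1, hf.2.1]
    exact Ico_subset_Icc_self hy
  obtain ⟨x, hx, rfl⟩ := intermediate_value_Icc zero_le_one hf.continuousOn hy'
  refine ⟨x, ⟨hx.1, hx.2.lt_of_ne ?_⟩, rfl⟩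
  rintro rfl
  exact hy.2.ne hf.2.1

theorem eqOn_Icc_of_eqOn_Ico (hf : IsPLF f) (hg : IsPLF g) (hc : c ≤ 1)
    (h : EqOn f g (Ico 0 c)) : EqOn f g (Icc 0 c) := by
  rcases eq_or_ne 0 c with rfl | hc0
  · rintro t ⟨ht0, ht⟩
    rw [le_antisymm ht ht0, hf.1, hg.1]
  · exact h.of_subset_closure (hf.continuousOn.mono (Icc_subset_Icc_right hc))
      (hg.continuousOn.mono (Icc_subset_Icc_right hc)) Ico_subset_Icc_self (closure_Ico hc0).ge

theorem plfLt_or_plfLt (hf : IsPLF f) (hg : IsPLF g) (hne : ¬ EqOn f g (Icc 0 1)) :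
    plfLt f g ∨ plfLt g f := by
  set D := {t ∈ Icc (0 : ℝ) 1 | f t ≠ g t}
  have hD : D.Nonempty := by simpa [EqOn, D, Set.Nonempty, and_assoc] using hne
  have hbdd : BddBelow D := ⟨0, fun t ht => ht.1.1⟩
  set c := sInf D
  have hc0 : 0 ≤ c := le_csInf hD fun t ht => ht.1.1
  have hc1 : c ≤ 1 := (csInf_le hbdd hD.some_mem).trans hD.some_mem.1.2
  have heq : EqOn f g (Icc 0 c) := hf.eqOn_Icc_of_eqOn_Ico hg hc1 fun t ht => by
    by_contra hft
    exact (csInf_le hbdd ⟨⟨ht.1, ht.2.le.trans hc1⟩, hft⟩).not_gt ht.2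
  have hc : c ∈ Ico 0 1 := ⟨hc0, hc1.lt_of_ne fun hc_eq => hne (hc_eq ▸ heq)⟩
  obtain ⟨kf, -, hkf⟩ := hf.exists_hasRightSlope hc
  obtain ⟨kg, -, hkg⟩ := hg.exists_hasRightSlope hc
  rcases lt_trichotomy kf kg with hk | rfl | hk
  · exact .inl (plfLt_iff.2 ⟨c, hc, heq, kf, kg, hk, hkf, hkg⟩)
  · obtain ⟨δ, hδ, hfg⟩ := eventually_nhdsGE_iff_exists_Icc.1 (hkf.and hkg)
    have hδc : c + δ ≤ c := le_csInf hD fun t ht => not_lt.1 fun htδ => by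
      obtain ⟨hft, hgt⟩ := hfg t ⟨csInf_le hbdd ht, htδ.le⟩
      exact ht.2 (by rw [hft, hgt, heq ⟨hc0, le_rfl⟩])
    linarith
  · exact .inr (plfLt_iff.2 ⟨c, hc, heq.symm, kg, kf, hk, hkg, hkf⟩)

end IsPLF

namespace plfLt

variable {f g h : ℝ → ℝ}

theorem comp_left (hf : IsPLF f) (hh : IsPLF h) (hfg : plfLt f g) : plfLt (h ∘ f) (h ∘ g) := by
  obtain ⟨c, hc, heq, kf, kg, hk, hkf, hkg⟩ := plfLt_iff.1 hfg
  have hkf0 : 0 < kf := hf.hasRightSlope_pos hc hkf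
  obtain ⟨kh, hkh, hhf⟩ := hh.exists_hasRightSlope (hf.mapsTo_Ico hc)
  have hhg : HasRightSlope h (g c) kh := by rwa [← heq ⟨hc.1, le_rfl⟩]
  exact plfLt_iff.2 ⟨c, hc, fun t ht => congrArg h (heq ht), kh * kf, kh * kg,
    mul_lt_mul_of_pos_left hk hkh, hhf.comp hkf hkf0.le, hhg.comp hkg (hkf0.trans hk).le⟩

theorem comp_right (hh : IsPLF h) (hfg : plfLt f g) : plfLt (f ∘ h) (g ∘ h) := by
  obtain ⟨c, hc, heq, kf, kg, hk, hkf, hkg⟩ := plfLt_iff.1 hfg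
  obtain ⟨c', hc', rfl⟩ := hh.surjOn_Ico hc
  obtain ⟨kh, hkh, hslope⟩ := hh.exists_hasRightSlope hc'
  exact plfLt_iff.2 ⟨c', hc', fun t ht => heq (hh.mapsTo_Icc hc'.2.le ht), kf * kh, kg * kh,
    mul_lt_mul_of_pos_right hk hkh, hkf.comp hslope hkh.le, hkg.comp hslope hkh.le⟩

end plfLt

/-- The relation `plfLt` is a total order on the group `PLF₊[0,1]` of increasing
piecewise linear homeomorphisms of `[0,1]` (irreflexive, asymmetric and total on
functions distinct on `[0,1]`, transitive), invariant under composition on both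
sides. -/
theorem stmt_6 :
    (∀ f : ℝ → ℝ, IsPLF f → ¬ plfLt f f) ∧
    (∀ f g : ℝ → ℝ, IsPLF f → IsPLF g → ¬ Set.EqOn f g (Set.Icc 0 1) →
      (plfLt f g ↔ ¬ plfLt g f)) ∧
    (∀ f g h : ℝ → ℝ, IsPLF f → IsPLF g → IsPLF h →
      plfLt f g → plfLt g h → plfLt f h) ∧
    (∀ f g h : ℝ → ℝ, IsPLF f → IsPLF g → IsPLF h → plfLt f g →
      plfLt (h ∘ f) (h ∘ g) ∧ plfLt (f ∘ h) (g ∘ h)) :=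
  ⟨fun f _ => plfLt_irrefl f,
    fun _ _ hf hg hne => ⟨plfLt_asymm, (hf.plfLt_or_plfLt hg hne).resolve_right⟩,
    fun _ _ _ _ _ _ => plfLt_trans,
    fun _ _ _ hf _ hh hfg => ⟨hfg.comp_left hf hh, hfg.comp_right hh⟩⟩
end

section
/- In a bi-orderable group, the centralizer property holds: if aⁿ commutes with b for some nonzero integer n, then a commutes with b. -/
def BiOrderable (G : Type*) [Group G] : Prop :=
  ∃ r : LinearOrder G,
    (∀ a b c : G, r.lt a b → r.lt (c * a) (c * b)) ∧
    (∀ a b c : G, r.lt a b → r.lt (a * c) (b * c))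

/-- Powers are strictly monotone for a bi-invariant order, hence injective. -/
theorem BiOrderable.isMulTorsionFree {G : Type*} [Group G] (hG : BiOrderable G) :
    IsMulTorsionFree G := by
  obtain ⟨r, hleft, hright⟩ := hG
  let _ := r
  have : MulLeftStrictMono G := ⟨fun c _ _ hab => hleft _ _ c hab⟩
  have : MulRightStrictMono G := ⟨fun c _ _ hab => hright _ _ c hab⟩
  infer_instance

/-- `b a b⁻¹` and `a` have the same `n`-th power, and `n`-th roots are unique. -/
theorem Commute.of_zpow_left {G : Type*} [Group G] [IsMulTorsionFree G] {a b : G} {n : ℤ}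
    (hn : n ≠ 0) (h : Commute (a ^ n) b) : Commute a b := by
  have hconj : (b * a * b⁻¹) ^ n = a ^ n := by
    rw [conj_zpow, ← h.eq, mul_inv_cancel_right]
  exact (mul_inv_eq_iff_eq_mul.mp (zpow_left_injective hn hconj)).symm

/-- In a bi-orderable group, if `aⁿ` commutes with `b` for some nonzero
integer `n`, then `a` commutes with `b` (the centralizer property). -/
theorem stmt_14 {G : Type*} [Group G] (hG : BiOrderable G)
    (a b : G) (n : ℤ) (hn : n ≠ 0) (h : a ^ n * b = b * a ^ n) :
    a * b = b * a :=
  have := hG.isMulTorsionFree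
  Commute.of_zpow_left hn h
end

section
/- Every virtually abelian subgroup of a group with the centralizer property is abelian. In particular, every virtually abelian subgroup of a bi-orderable group is abelian. -/
/-- `G` has the centralizer property: `[aⁿ, b] = 1` with `n ≠ 0` implies
`[a, b] = 1`. -/
def CentralizerProperty (G : Type*) [Group G] : Prop :=
  ∀ (a b : G) (n : ℤ), n ≠ 0 → a ^ n * b = b * a ^ n → a * b = b * a

/-- Mathlib's `IsMulTorsionFree` asks for injectivity of `x ↦ x ^ n` (unique roots), which for
non-commutative groups is stronger than having no elements of finite order. -/
theorem centralizerProperty_of_isMulTorsionFree {G : Type*} [Group G] [IsMulTorsionFree G] :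
    CentralizerProperty G := by
  intro a b n hn hab
  have hconj : (b⁻¹ * a * b) ^ n = a ^ n := by
    simpa [mul_assoc, hab] using conj_zpow (i := n) (a := b⁻¹) (b := a)
  have hab' : b⁻¹ * a * b = a := zpow_left_injective hn hconj
  calc a * b = b * (b⁻¹ * a * b) := by group
    _ = b * a := by rw [hab']

theorem BiOrderable.centralizerProperty {G : Type*} [Group G] (hG : BiOrderable G) :
    CentralizerProperty G :=
  haveI := hG.isMulTorsionFree
  centralizerProperty_of_isMulTorsionFree

theorem CentralizerProperty.commute_of_commute_pow {G : Type*} [Group G]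
    (hG : CentralizerProperty G) {a b : G} {m n : ℕ} (hm : m ≠ 0) (hn : n ≠ 0)
    (h : Commute (a ^ m) (b ^ n)) : Commute a b := by
  have hab : Commute a (b ^ n) :=
    hG a (b ^ n) m (Int.natCast_ne_zero.mpr hm) (by rw [zpow_natCast]; exact h)
  exact (hG b a n (Int.natCast_ne_zero.mpr hn) (by rw [zpow_natCast]; exact hab.symm)).symm

theorem Subgroup.exists_pow_mem_of_finiteIndex_subgroupOf {G : Type*} [Group G]
    {H K : Subgroup G} [(K.subgroupOf H).FiniteIndex] {a : G} (ha : a ∈ H) :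
    ∃ n, n ≠ 0 ∧ a ^ n ∈ K := by
  obtain ⟨n, hn, -, hmem⟩ :=
    (K.subgroupOf H).exists_pow_mem_of_index_ne_zero FiniteIndex.index_ne_zero ⟨a, ha⟩
  exact ⟨n, hn.ne', by simpa [Subgroup.mem_subgroupOf] using hmem⟩

theorem stmt_15_general {G : Type*} [Group G] (H : Subgroup G)
    (K : Subgroup G)
    (hKab : ∀ a b : G, a ∈ K → b ∈ K → a * b = b * a)
    (hKfin : (K.subgroupOf H).FiniteIndex) :
    (CentralizerProperty G → ∀ a b : G, a ∈ H → b ∈ H → a * b = b * a) ∧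
    (BiOrderable G → ∀ a b : G, a ∈ H → b ∈ H → a * b = b * a) := by
  have habelian (hG : CentralizerProperty G) (a b : G) (ha : a ∈ H) (hb : b ∈ H) :
      Commute a b := by
    obtain ⟨m, hm, ham⟩ := Subgroup.exists_pow_mem_of_finiteIndex_subgroupOf (K := K) ha
    obtain ⟨n, hn, hbn⟩ := Subgroup.exists_pow_mem_of_finiteIndex_subgroupOf (K := K) hb
    exact hG.commute_of_commute_pow hm hn (hKab _ _ ham hbn)
  exact ⟨habelian, fun hG => habelian hG.centralizerProperty⟩

/-- Every virtually abelian subgroup of a group with the centralizer property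
is abelian; in particular, every virtually abelian subgroup of a bi-orderable
group is abelian. -/
theorem stmt_15 {G : Type*} [Group G] (H : Subgroup G)
    (K : Subgroup G) (hKH : K ≤ H)
    (hKab : ∀ a b : G, a ∈ K → b ∈ K → a * b = b * a)
    (hKfin : (K.subgroupOf H).FiniteIndex) :
    (CentralizerProperty G → ∀ a b : G, a ∈ H → b ∈ H → a * b = b * a) ∧
    (BiOrderable G → ∀ a b : G, a ∈ H → b ∈ H → a * b = b * a) :=
  stmt_15_general H K hKab hKfin
end
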